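/- Let G act on a simplicial complex K by exchangeable vertices. Then a fundamental domain exists for this action: there is a full subcomplex L of K whose vertex set meets each vertex G-orbit exactly once. -/

import Mathlib

variable {V : Type*}

def IsComplex (F : Set (Finset V)) : Prop :=
  (∀ s ∈ F, s.Nonempty) ∧ ∀ s ∈ F, ∀ t ⊆ s, t.Nonempty → t ∈ F

def IsAuto [DecidableEq V] (F : Set (Finset V)) (φ : Equiv.Perm V) : Prop :=
  ∀ s : Finset V, s ∈ F ↔ s.image φ ∈ F

def IsExchange [DecidableEq V] (F : Set (Finset V)) (u v : V) (φ : Equiv.Perm V) : Prop :=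
  IsAuto F φ ∧ φ u = v ∧ φ v = u ∧ ∀ w : V, w ≠ u → w ≠ v → φ w = w

def Exchangeable [DecidableEq V] (F : Set (Finset V)) (u v : V) : Prop :=
  ∃ φ : Equiv.Perm V, IsExchange F u v φ

def vertices (F : Set (Finset V)) : Set V := {v | ({v} : Finset V) ∈ F}

def quotFaces (F : Set (Finset V)) (G : Subgroup (Equiv.Perm V)) : Set (Finset (Set V)) :=
  {S | ∃ s ∈ F, (↑S : Set (Set V)) = (fun v => MulAction.orbit (↥G) v) '' ↑s}

def ActsByExch [DecidableEq V] (F : Set (Finset V)) (G : Subgroup (Equiv.Perm V)) : Prop :=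
  ∃ M : Set (Equiv.Perm V), G = Subgroup.closure M ∧
    ∀ φ ∈ M, ∃ u v : V, u ≠ v ∧ IsExchange F u v φ

def fullSubFaces (F : Set (Finset V)) (W : Set V) : Set (Finset V) :=
  {s ∈ F | ↑s ⊆ W}

/-!
A group generated by automorphisms of a simplicial complex consists of automorphisms, so it
maps vertices to vertices and the vertex set is a union of `G`-orbits. A fundamental domain is
then the full subcomplex spanned by any transversal of these orbits.
-/

section Transversal

variable {G α : Type*} [Group G] [MulAction G α]

open MulAction

theorem exists_transversal_of_smul_mem {S : Set α} (hS : ∀ g : G, ∀ a ∈ S, g • a ∈ S) :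
    ∃ W ⊆ S, ∀ a ∈ S, ∃! x, x ∈ W ∧ x ∈ orbit G a := by
  let rep : α → α := fun a => (Quotient.mk (orbitRel G α) a).out
  have rep_mem_orbit (a : α) : rep a ∈ orbit G a := Quotient.mk_out (s := orbitRel G α) a
  have rep_eq {a b : α} (h : a ∈ orbit G b) : rep a = rep b := by
    simp only [rep, Quotient.sound (s := orbitRel G α) h]
  refine ⟨rep '' S, ?_, fun a ha => ⟨rep a, ⟨⟨a, ha, rfl⟩, rep_mem_orbit a⟩, ?_⟩⟩
  · rintro _ ⟨a, ha, rfl⟩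
    obtain ⟨g, hg⟩ := rep_mem_orbit a
    exact hg ▸ hS g a ha
  · rintro _ ⟨⟨b, -, rfl⟩, hba⟩
    have horbit : orbit G b = orbit G a :=
      (orbit_eq_iff.2 (rep_mem_orbit b)).symm.trans (orbit_eq_iff.2 hba)
    exact rep_eq (orbit_eq_iff.1 horbit)

end Transversal

section Automorphisms

variable [DecidableEq V] {F : Set (Finset V)}

def autGroup (F : Set (Finset V)) : Subgroup (Equiv.Perm V) where
  carrier := {φ | IsAuto F φ}
  one_mem' s := by simp
  mul_mem' {φ ψ} hφ hψ s := by
    rw [Equiv.Perm.coe_mul, ← Finset.image_image]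
    exact (hψ s).trans (hφ _)
  inv_mem' {φ} hφ s := by
    simpa only [Finset.image_image, Equiv.Perm.coe_inv, Equiv.self_comp_symm, Finset.image_id]
      using (hφ (s.image ⇑φ⁻¹)).symm

theorem ActsByExch.le_autGroup {G : Subgroup (Equiv.Perm V)} (hG : ActsByExch F G) :
    G ≤ autGroup F := by
  obtain ⟨M, rfl, hM⟩ := hG
  refine (Subgroup.closure_le _).2 fun φ hφ => ?_
  obtain ⟨u, v, -, hφ, -⟩ := hM φ hφ
  exact hφ

theorem IsAuto.apply_mem_vertices {φ : Equiv.Perm V} (hφ : IsAuto F φ) {v : V}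
    (hv : v ∈ vertices F) : φ v ∈ vertices F := by
  simpa [vertices] using (hφ {v}).1 hv

end Automorphisms

theorem fundamentalDomain_exists_general [DecidableEq V] (F : Set (Finset V))
    (G : Subgroup (Equiv.Perm V)) (hG : ActsByExch F G) :
    ∃ W : Set V, W ⊆ vertices F ∧
      ∀ v ∈ vertices F, ∃! x : V, x ∈ W ∧ x ∈ MulAction.orbit (↥G) v :=
  exists_transversal_of_smul_mem fun g _ hv => (hG.le_autGroup g.2).apply_mem_vertices hv

/-- If `G` acts on the simplicial complex `F` by exchangeable vertices, then a
fundamental domain exists: there is a set `W` of vertices of `F` (determining a full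
subcomplex of `F`) meeting each vertex `G`-orbit exactly once. -/
theorem fundamentalDomain_exists [DecidableEq V] (F : Set (Finset V)) (hF : IsComplex F)
    (G : Subgroup (Equiv.Perm V)) (hG : ActsByExch F G) :
    ∃ W : Set V, W ⊆ vertices F ∧
      ∀ v ∈ vertices F, ∃! x : V, x ∈ W ∧ x ∈ MulAction.orbit (↥G) v :=
  fundamentalDomain_exists_general F G hG
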